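/- arXiv:2511.14867 — 6 statements merged into one kernel-verified Lean document; each statement's English description precedes it below -/
import Mathlib

section
/- For every integer n ≥ 2 and every odd integer m ≥ 3, the graph G on 3n + 3 vertices that is the disjoint union of three copies of the complete graph K_{n+1} contains no copy of K_{2,n}, and its complement, the complete tripartite graph with three parts of size n + 1, contains no copy of the wheel W_m. -/
open SimpleGraph

/-- `ContainsCopy Γ H` : `Γ` contains a copy of `H`, i.e. `H` is isomorphic to a subgraph
of `Γ`; equivalently, there is an injective graph homomorphism from `H` to `Γ`. -/
def ContainsCopy {α β : Type*} (Γ : SimpleGraph α) (H : SimpleGraph β) : Prop :=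
  ∃ f : H →g Γ, Function.Injective f

/-- The wheel graph `W_m` on `m+1` vertices: the join of a single hub vertex (`none`)
with the cycle `C_m` (on the vertices `some i`). -/
def wheelGraph (m : ℕ) : SimpleGraph (Option (Fin m)) :=
  SimpleGraph.fromRel (fun x y =>
    x = none ∨ ∃ i j : Fin m, x = some i ∧ y = some j ∧ (SimpleGraph.cycleGraph m).Adj i j)

/-!
`K_{2,n}` is connected, so a copy of it lies inside a single component `K_{n+1}` of the
disjoint union, which is too small for its `n + 2` vertices. The complete tripartite graph is
properly `3`-coloured by its parts; in a `3`-colouring of `W_m` the hub takes one colour,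
leaving only two for the rim `C_m`, which is impossible for `m` odd.
-/

namespace SimpleGraph

variable {V α : Type*} {G : SimpleGraph V}

theorem Reachable.apply_eq_of_adj {c : V → α} (hc : ∀ ⦃x y⦄, G.Adj x y → c x = c y)
    {u v : V} (h : G.Reachable u v) : c u = c v := by
  obtain ⟨p⟩ := h
  induction p with
  | nil => rfl
  | cons ha _ ih => exact (hc ha).trans ih

theorem completeBipartiteGraph_connected (β γ : Type*) [Nonempty β] [Nonempty γ] :
    (completeBipartiteGraph β γ).Connected := by
  obtain ⟨b⟩ := ‹Nonempty β›
  obtain ⟨c⟩ := ‹Nonempty γ›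
  have reach_inl : ∀ v, (completeBipartiteGraph β γ).Reachable (.inl b) v := by
    have reach_inr : ∀ c', (completeBipartiteGraph β γ).Reachable (.inl b) (.inr c') :=
      fun _ => Adj.reachable (by simp)
    rintro (b' | c')
    · exact (reach_inr c).trans (Adj.reachable (by simp))
    · exact reach_inr c'
  exact (connected_iff_exists_forall_reachable _).mpr ⟨.inl b, reach_inl⟩

theorem compl_fromRel_fst_eq_completeEquipartiteGraph (r t : ℕ) :
    (fromRel fun x y : Fin r × Fin t => x.1 = y.1)ᶜ = completeEquipartiteGraph r t := by
  ext x y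
  simp only [compl_adj, fromRel_adj, completeEquipartiteGraph_adj]
  grind

end SimpleGraph

theorem not_containsCopy_fromRel_fst {ι κ β : Type*} [Fintype κ] [Fintype β]
    {H : SimpleGraph β} (hH : H.Connected) (hcard : Fintype.card κ < Fintype.card β) :
    ¬ ContainsCopy (fromRel fun x y : ι × κ => x.1 = y.1) H := by
  rintro ⟨f, hf⟩
  have fst_eq : ∀ u v, (f u).1 = (f v).1 := fun u v =>
    ((hH u v).map f).apply_eq_of_adj fun x y hxy => by
      rcases (fromRel_adj _ x y).mp hxy with ⟨-, h | h⟩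
      exacts [h, h.symm]
  have snd_injective : Function.Injective fun v => (f v).2 :=
    fun u v huv => hf (Prod.ext (fst_eq u v) huv)
  exact (Fintype.card_le_of_injective _ snd_injective).not_gt hcard

theorem wheelGraph_adj_none_some {m : ℕ} (i : Fin m) : (wheelGraph m).Adj none (some i) :=
  (fromRel_adj _ _ _).mpr ⟨(Option.some_ne_none i).symm, .inl (.inl rfl)⟩

theorem wheelGraph_adj_some_some {m : ℕ} {i j : Fin m} (h : (cycleGraph m).Adj i j) :
    (wheelGraph m).Adj (some i) (some j) :=
  (fromRel_adj _ _ _).mpr ⟨by simpa using h.ne, .inl (.inr ⟨i, j, rfl, rfl, h⟩)⟩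

theorem SimpleGraph.Colorable.cycleGraph_of_wheelGraph {m k : ℕ}
    (h : (wheelGraph m).Colorable (k + 1)) : (cycleGraph m).Colorable k := by
  obtain ⟨C⟩ := h
  let rim : (cycleGraph m).Coloring {c // c ≠ C none} :=
    Coloring.mk (fun i => ⟨C (some i), (C.valid (wheelGraph_adj_none_some i)).symm⟩)
      fun hij => Subtype.coe_ne_coe.mp (C.valid (wheelGraph_adj_some_some hij))
  simpa [Fintype.card_subtype_compl] using rim.colorable

theorem wheelGraph_not_colorable_three {m : ℕ} (hm : 2 ≤ m) (hmodd : Odd m) :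
    ¬ (wheelGraph m).Colorable 3 := by
  intro h
  have := h.cycleGraph_of_wheelGraph.chromaticNumber_le
  rw [chromaticNumber_cycleGraph_of_odd m hm hmodd] at this
  norm_num at this

/-- For every integer `n ≥ 2` and every odd integer `m ≥ 3`, the graph on `3n+3` vertices
that is the disjoint union of three copies of `K_{n+1}` contains no copy of `K_{2,n}`, and
its complement (the complete tripartite graph with parts of size `n+1`) contains no copy
of the wheel `W_m`. -/
theorem statement1 (n m : ℕ) (hn : 2 ≤ n) (hm : 3 ≤ m) (hmodd : Odd m) :
    ¬ ContainsCopy (SimpleGraph.fromRel (fun x y : Fin 3 × Fin (n + 1) => x.1 = y.1))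
        (completeBipartiteGraph (Fin 2) (Fin n)) ∧
    ¬ ContainsCopy (SimpleGraph.fromRel (fun x y : Fin 3 × Fin (n + 1) => x.1 = y.1))ᶜ
        (wheelGraph m) := by
  have : NeZero n := ⟨by omega⟩
  refine ⟨not_containsCopy_fromRel_fst (completeBipartiteGraph_connected _ _)
    (by simp only [Fintype.card_sum, Fintype.card_fin]; omega), ?_⟩
  rintro ⟨f, -⟩
  have tripartite : (wheelGraph m).Colorable 3 := by
    rw [compl_fromRel_fst_eq_completeEquipartiteGraph] at f
    simpa using Colorable.of_hom f Coloring.completeEquipartiteGraph.colorable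
  exact wheelGraph_not_colorable_three (by omega) hmodd tripartite
end

section
/- Let n ≥ 1 be an integer. If G is a graph on 3n + 4 vertices that contains no copy of K_{2,n}, then the minimum degree of G satisfies δ(G) < √3·(n + 1). -/
open SimpleGraph

open Finset in
lemma common_lt {V : Type*} [Fintype V] [DecidableEq V] (G : SimpleGraph V)
    [DecidableRel G.Adj] (n : ℕ)
    (hG : ¬ ContainsCopy G (completeBipartiteGraph (Fin 2) (Fin n)))
    {u w : V} (huw : u ≠ w) :
    (G.neighborFinset u ∩ G.neighborFinset w).card < n := by
  by_contra h
  push_neg at h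
  obtain ⟨t, hts, htc⟩ := Finset.exists_subset_card_eq h
  let e := t.equivFinOfCardEq htc
  set g : Fin n → V := fun j => ((e.symm j : t) : V) with hg
  have hgu : ∀ j, G.Adj u (g j) := fun j => by
    have := hts (e.symm j).2; simp only [Finset.mem_inter, mem_neighborFinset] at this
    exact this.1
  have hgw : ∀ j, G.Adj w (g j) := fun j => by
    have := hts (e.symm j).2; simp only [Finset.mem_inter, mem_neighborFinset] at this
    exact this.2
  have hginj : Function.Injective g :=
    fun a b hab => e.symm.injective (Subtype.ext hab)
  set f : Fin 2 ⊕ Fin n → V := Sum.elim (fun i => if i = 0 then u else w) g with hf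
  have hmap : ∀ {x y}, (completeBipartiteGraph (Fin 2) (Fin n)).Adj x y → G.Adj (f x) (f y) := by
    rintro (i | j) (i' | j') hadj
    · simp [completeBipartiteGraph] at hadj
    · simp only [hf, Sum.elim_inl, Sum.elim_inr]
      split_ifs
      · exact hgu j'
      · exact hgw j'
    · simp only [hf, Sum.elim_inl, Sum.elim_inr]
      split_ifs
      · exact (hgu j).symm
      · exact (hgw j).symm
    · simp [completeBipartiteGraph] at hadj
  apply hG
  refine ⟨⟨f, hmap⟩, ?_⟩
  have : ∀ x, (⟨f, hmap⟩ : completeBipartiteGraph (Fin 2) (Fin n) →g G) x = f x := fun _ => rfl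
  rintro (i | j) (i' | j') hab <;> rw [this, this] at hab <;>
    simp only [hf, Sum.elim_inl, Sum.elim_inr] at hab
  · congr 1
    by_contra hii
    fin_cases i <;> fin_cases i' <;> simp_all
  · exfalso
    split_ifs at hab
    · exact (hgu j').ne' hab.symm
    · exact (hgw j').ne' hab.symm
  · exfalso
    split_ifs at hab
    · exact (hgu j).ne' hab
    · exact (hgw j).ne' hab
  · exact congrArg Sum.inr (hginj hab)

/-- Let `n ≥ 1`. If `G` is a graph on `3n+4` vertices containing no copy of `K_{2,n}`,
then `δ(G) < √3 (n+1)`. -/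
theorem statement5 (n : ℕ) (hn : 1 ≤ n)
    (G : SimpleGraph (Fin (3 * n + 4))) [DecidableRel G.Adj]
    (hG : ¬ ContainsCopy G (completeBipartiteGraph (Fin 2) (Fin n))) :
    (G.minDegree : ℝ) < Real.sqrt 3 * (n + 1) := by

  have step1 : ∀ v : Fin (3 * n + 4), (G.neighborFinset v).offDiag =
      (Finset.univ : Finset (Fin (3 * n + 4))).offDiag.filter
        (fun p => G.Adj v p.1 ∧ G.Adj v p.2) := by
    intro v
    ext ⟨a, b⟩
    simp [Finset.mem_offDiag, mem_neighborFinset, and_assoc, and_comm, and_left_comm]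
  have step2 : ∀ p : Fin (3 * n + 4) × Fin (3 * n + 4),
      (G.neighborFinset p.1 ∩ G.neighborFinset p.2) =
      Finset.univ.filter (fun v => G.Adj v p.1 ∧ G.Adj v p.2) := by
    intro p
    ext a
    simp [mem_neighborFinset, adj_comm]
  have S1eqS2 : ∑ v, (G.neighborFinset v).offDiag.card =
      ∑ p ∈ (Finset.univ : Finset (Fin (3 * n + 4))).offDiag,
        (G.neighborFinset p.1 ∩ G.neighborFinset p.2).card := by
    simp only [step1, step2, Finset.card_filter]
    exact Finset.sum_comm
  have upper : ∑ p ∈ (Finset.univ : Finset (Fin (3 * n + 4))).offDiag,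
      (G.neighborFinset p.1 ∩ G.neighborFinset p.2).card ≤
      ((3 * n + 4) * (3 * n + 3)) * (n - 1) := by
    calc ∑ p ∈ (Finset.univ : Finset (Fin (3 * n + 4))).offDiag,
        (G.neighborFinset p.1 ∩ G.neighborFinset p.2).card
        ≤ ∑ _p ∈ (Finset.univ : Finset (Fin (3 * n + 4))).offDiag, (n - 1) := by
          refine Finset.sum_le_sum fun p hp => ?_
          have hne : p.1 ≠ p.2 := (Finset.mem_offDiag.mp hp).2.2
          have := common_lt G n hG hne
          omega
      _ = ((3 * n + 4) * (3 * n + 4) - (3 * n + 4)) * (n - 1) := by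
          rw [Finset.sum_const, Finset.offDiag_card, smul_eq_mul]
          simp
      _ = ((3 * n + 4) * (3 * n + 3)) * (n - 1) := by
          have h4 : (3*n+4) * (3*n+4) - (3*n+4) = (3*n+4) * (3*n+4 - 1) := by
            rw [Nat.mul_sub, mul_one]
          rw [h4]
          congr 1
  have hlow : ∀ v, G.minDegree * (G.minDegree - 1) ≤ (G.neighborFinset v).offDiag.card := by
    intro v
    rw [Finset.offDiag_card, G.card_neighborFinset_eq_degree]
    have hd := G.minDegree_le_degree v
    have h1 : G.minDegree * (G.minDegree - 1) ≤ G.degree v * (G.degree v - 1) :=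
      Nat.mul_le_mul hd (Nat.sub_le_sub_right hd 1)
    have h2 : G.degree v * (G.degree v - 1) = G.degree v * G.degree v - G.degree v := by
      rw [Nat.mul_sub, mul_one]
    omega
  have key : G.minDegree * (G.minDegree - 1) ≤ (3 * n + 3) * (n - 1) := by
    have hsum : (3 * n + 4) * (G.minDegree * (G.minDegree - 1)) ≤
        ((3 * n + 4) * (3 * n + 3)) * (n - 1) := by
      calc (3 * n + 4) * (G.minDegree * (G.minDegree - 1))
          = ∑ _v : Fin (3 * n + 4), G.minDegree * (G.minDegree - 1) := by
            rw [Finset.sum_const, Finset.card_univ, Fintype.card_fin, smul_eq_mul]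
        _ ≤ ∑ v, (G.neighborFinset v).offDiag.card := Finset.sum_le_sum fun v _ => hlow v
        _ = _ := S1eqS2
        _ ≤ _ := upper
    rw [mul_assoc] at hsum
    exact Nat.le_of_mul_le_mul_left hsum (by omega)
  rcases Nat.eq_zero_or_pos G.minDegree with h0 | h1
  · rw [h0]
    push_cast
    positivity
  · have keyR : (G.minDegree : ℝ) * ((G.minDegree : ℝ) - 1) ≤ (3 * n + 3) * ((n : ℝ) - 1) := by
      have h := (Nat.cast_le (α := ℝ)).mpr key
      rw [Nat.cast_mul, Nat.cast_mul, Nat.cast_sub h1, Nat.cast_sub hn] at h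
      push_cast at h ⊢
      linarith
    by_contra hc
    push_neg at hc
    have h3 : Real.sqrt 3 * Real.sqrt 3 = 3 := Real.mul_self_sqrt (by norm_num)
    have hs1 : 1 ≤ Real.sqrt 3 := by nlinarith [Real.sqrt_nonneg 3]
    have hs2 : Real.sqrt 3 ≤ 2 := by nlinarith [Real.sqrt_nonneg 3]
    have hn' : (1 : ℝ) ≤ n := by exact_mod_cast hn
    have e1 : Real.sqrt 3 * ((n : ℝ) + 1) * (Real.sqrt 3 * ((n : ℝ) + 1) - 1) ≤
        (G.minDegree : ℝ) * ((G.minDegree : ℝ) - 1) :=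
      mul_le_mul hc (by linarith) (by nlinarith) (by positivity)
    have e2 : Real.sqrt 3 * ((n : ℝ) + 1) ≤ 2 * ((n : ℝ) + 1) :=
      mul_le_mul_of_nonneg_right hs2 (by linarith)
    have e4 : Real.sqrt 3 * ((n : ℝ) + 1) * (Real.sqrt 3 * ((n : ℝ) + 1) - 1) =
        3 * ((n : ℝ) + 1) ^ 2 - Real.sqrt 3 * ((n : ℝ) + 1) := by
      have : Real.sqrt 3 * ((n : ℝ) + 1) * (Real.sqrt 3 * ((n : ℝ) + 1) - 1) =
          (Real.sqrt 3 * Real.sqrt 3) * (((n : ℝ) + 1) * ((n : ℝ) + 1)) -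
            Real.sqrt 3 * ((n : ℝ) + 1) := by ring
      rw [this, h3]; ring
    nlinarith [e1, keyR, e2, e4, hn']
end

section
/- Let n ≥ 1 be an integer and let G be a graph on 3n + 4 vertices that contains no copy of K_{2,n}. Let v be a vertex whose degree in the complement G̅ equals the maximum degree Δ(G̅), and suppose (3 − √3)(n + 1) ≤ Δ(G̅) ≤ (3/2)(n + 1) − 1. Then the subgraph of G̅ induced on the neighbourhood N_{G̅}(v) is not bipartite. -/
open SimpleGraph Finset

/-- A graph is bipartite if its vertex set can be partitioned into two parts with every
edge joining the two parts. -/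
def IsBip {α : Type*} (G : SimpleGraph α) : Prop :=
  ∃ A : Set α, ∀ ⦃x y⦄, G.Adj x y → (x ∈ A ↔ y ∉ A)

lemma codeg {n : ℕ} {V : Type*} [Fintype V] [DecidableEq V] (G : SimpleGraph V)
    [DecidableRel G.Adj]
    (hG : ¬ ContainsCopy G (completeBipartiteGraph (Fin 2) (Fin n)))
    {x y : V} (hxy : x ≠ y) :
    (G.neighborFinset x ∩ G.neighborFinset y).card < n := by
  classical
  by_contra hc
  push_neg at hc
  obtain ⟨t, ht, htc⟩ := Finset.exists_subset_card_eq hc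
  set e : Fin n → V := fun j => ((t.equivFinOfCardEq htc).symm j : V) with he
  have heinj : Function.Injective e := fun i j hij => by
    have := Subtype.coe_injective hij
    exact (t.equivFinOfCardEq htc).symm.injective this
  have hmem : ∀ j : Fin n, G.Adj x (e j) ∧ G.Adj y (e j) := by
    intro j
    have hm := ht ((t.equivFinOfCardEq htc).symm j).2
    simpa only [Finset.mem_inter, mem_neighborFinset] using hm
  apply hG
  refine ⟨⟨Sum.elim ![x, y] (fun j => e j), ?_⟩, ?_⟩
  · rintro (i | i) (j | j) hadj <;> simp only [completeBipartiteGraph_adj] at hadj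
    · simp at hadj
    · simp only [Sum.elim_inl, Sum.elim_inr]
      fin_cases i
      · exact (hmem j).1
      · exact (hmem j).2
    · simp only [Sum.elim_inl, Sum.elim_inr]
      fin_cases j
      · exact (hmem i).1.symm
      · exact (hmem i).2.symm
    · simp at hadj
  · have hinj : Function.Injective (Sum.elim ![x, y] (fun j => e j) : Fin 2 ⊕ Fin n → V) := by
      rintro (i | i) (j | j) h <;> simp only [Sum.elim_inl, Sum.elim_inr] at h
      · congr 1
        fin_cases i <;> fin_cases j <;> simp_all
      · exfalso
        fin_cases i
        · exact G.ne_of_adj (hmem j).1 (by simpa using h)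
        · exact G.ne_of_adj (hmem j).2 (by simpa using h)
      · exfalso
        fin_cases j
        · exact G.ne_of_adj (hmem i).1 (by simpa using h.symm)
        · exact G.ne_of_adj (hmem i).2 (by simpa using h.symm)
      · congr 1
        exact heinj h
    exact hinj

lemma keyArith (m d a : ℤ) (hm : 5 ≤ m) (h1 : 6*m ≤ 5*d) (h2 : 2*d ≤ 3*m-2)
    (h3 : d ≤ 2*a) (h4 : a ≤ m) :
    (3*m+1-a) * (a*(a-1)*(m-a)) < a*(3*m+1-d-a) * (a*(3*m+1-d-a) - (3*m+1-a))
    ∧ (3*m+1-a) ≤ a*(3*m+1-d-a) := by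
  have ha3 : 3 ≤ a := by linarith
  have hc2 : 1 ≤ 2*d-2*m-1 := by linarith
  have hR : 0 < 6*m^2-8*d*m+7*m+3*d^2-4*d+2 := by nlinarith [sq_nonneg (6*d-8*m-4)]
  have hQh : 0 < 4*d^3-14*d^2*m-7*d^2+12*d*m^2+26*d*m+8*d-24*m^2-20*m-4 := by
    rcases eq_or_lt_of_le hm with hm5 | hm6
    · have hd : d = 6 := by omega
      rw [hd, ← hm5]
      norm_num
    · have hm6' : 6 ≤ m := hm6
      nlinarith [mul_nonneg (mul_nonneg (by linarith : (0:ℤ) ≤ 3*m-2-2*d) (by linarith : (0:ℤ) ≤ 3*m-2-2*d)) (by linarith : (0:ℤ) ≤ 3*m-10-5*(3*m-2-2*d)),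
        mul_nonneg (mul_nonneg (by linarith : (0:ℤ) ≤ 3*m-2-2*d) (by linarith : (0:ℤ) ≤ 3*m-2-2*d)) (by linarith : (0:ℤ) ≤ 14*m-75),
        mul_nonneg (by linarith : (0:ℤ) ≤ 3*m-2-2*d) (by nlinarith : (0:ℤ) ≤ 6*m^2+6*m-68),
        sq_nonneg (m-6), mul_nonneg (by linarith : (0:ℤ) ≤ m-6) (by linarith : (0:ℤ) ≤ m)]
  have hQ : 0 < 4*((-6*m^2+3*d*m-5*m+d-1) + (6*m^2-6*d*m+7*m+d^2-3*d+2)*a + (2*d-2*m-1)*a^2) := by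
    have hid : 4*((-6*m^2+3*d*m-5*m+d-1) + (6*m^2-6*d*m+7*m+d^2-3*d+2)*a + (2*d-2*m-1)*a^2)
        = (4*d^3-14*d^2*m-7*d^2+12*d*m^2+26*d*m+8*d-24*m^2-20*m-4)
          + (2*a-d)*(2*(6*m^2-6*d*m+7*m+d^2-3*d+2)+(2*d-2*m-1)*(2*a+d)) := by ring
    rw [hid]
    have h2ad : 0 ≤ 2*a - d := by linarith
    have hpos : 0 < 2*(6*m^2-6*d*m+7*m+d^2-3*d+2)+(2*d-2*m-1)*(2*a+d) := by
      have : (2*d-2*m-1)*(2*d) ≤ (2*d-2*m-1)*(2*a+d) := by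
        apply mul_le_mul_of_nonneg_left (by linarith) (by linarith)
      nlinarith [hR]
    nlinarith [mul_nonneg h2ad hpos.le]
  constructor
  · have hP : a*(3*m+1-d-a) * (a*(3*m+1-d-a) - (3*m+1-a)) - (3*m+1-a) * (a*(a-1)*(m-a))
        = a * ((-6*m^2+3*d*m-5*m+d-1) + (6*m^2-6*d*m+7*m+d^2-3*d+2)*a + (2*d-2*m-1)*a^2) := by
      ring
    nlinarith [mul_pos (by linarith : (0:ℤ) < a)
      (by linarith : (0:ℤ) < ((-6*m^2+3*d*m-5*m+d-1) + (6*m^2-6*d*m+7*m+d^2-3*d+2)*a + (2*d-2*m-1)*a^2))]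
  · nlinarith [mul_nonneg (by linarith : (0:ℤ) ≤ 10*a-6*m) (by linarith : (0:ℤ) ≤ 2*(3*m+1-d-a)-(m+4)),
      mul_nonneg (by linarith : (0:ℤ) ≤ m-5) (by linarith : (0:ℤ) ≤ m)]

set_option maxHeartbeats 1000000 in
/-- Let `n ≥ 1` and let `G` be a graph on `3n+4` vertices containing no copy of `K_{2,n}`.
Let `v` be a vertex of maximum degree in `G̅` and suppose
`(3 − √3)(n+1) ≤ Δ(G̅) ≤ (3/2)(n+1) − 1`. Then the subgraph of `G̅` induced on `N_{G̅}(v)`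
is not bipartite. -/
theorem statement7 (n : ℕ) (hn : 1 ≤ n)
    (G : SimpleGraph (Fin (3 * n + 4))) [DecidableRel G.Adj]
    (hG : ¬ ContainsCopy G (completeBipartiteGraph (Fin 2) (Fin n)))
    (v : Fin (3 * n + 4)) (hv : ∀ w, Gᶜ.degree w ≤ Gᶜ.degree v)
    (hlow : (3 - Real.sqrt 3) * (n + 1) ≤ (Gᶜ.degree v : ℝ))
    (hhigh : (Gᶜ.degree v : ℝ) ≤ (3 / 2 : ℝ) * (n + 1) - 1) :
    ¬ IsBip (Gᶜ.induce (Gᶜ.neighborSet v)) := by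
  classical
  intro hbip
  obtain ⟨Aset, hA⟩ := hbip
  set d : ℕ := Gᶜ.degree v with hd
  have hs3 : Real.sqrt 3 ≤ 1.74 := by
    rw [show (1.74:ℝ) = Real.sqrt (1.74^2) by rw [Real.sqrt_sq (by norm_num)]]
    apply Real.sqrt_le_sqrt
    norm_num
  have hcard : Fintype.card (Fin (3*n+4)) = 3*n+4 := by simp
  -- small n: hypotheses contradictory
  rcases lt_or_ge n 4 with hn4 | hn4
  · have hled : (3 - Real.sqrt 3) * (n + 1) ≤ (3 / 2 : ℝ) * (n + 1) - 1 := le_trans hlow hhigh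
    have hnle : (n:ℝ) ≤ 3 := by exact_mod_cast Nat.lt_succ_iff.mp hn4
    nlinarith [hs3, hnle]
  -- integer degree bounds
  have hd2 : 2*d ≤ 3*n+1 := by
    have h : ((2*d : ℕ) : ℝ) ≤ ((3*n+1 : ℕ) : ℝ) := by push_cast; linarith
    exact_mod_cast h
  have hd1 : 6*(n+1) ≤ 5*d := by
    have h : ((6*(n+1) : ℕ) : ℝ) ≤ ((5*d : ℕ) : ℝ) := by push_cast; nlinarith [hlow, hs3]
    exact_mod_cast h
  -- the two sides of the bipartition
  set S : Finset (Fin (3*n+4)) := Gᶜ.neighborFinset v with hS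
  have hScard : S.card = d := rfl
  set A1 : Finset (Fin (3*n+4)) :=
    S.filter (fun x => ∃ h : Gᶜ.Adj v x, (⟨x, h⟩ : (Gᶜ.neighborSet v)) ∈ Aset) with hA1
  set A2 : Finset (Fin (3*n+4)) := S \ A1 with hA2def
  have hiff : ∀ x y (hx : Gᶜ.Adj v x) (hy : Gᶜ.Adj v y), Gᶜ.Adj x y →
      ((⟨x, hx⟩ : (Gᶜ.neighborSet v)) ∈ Aset ↔ (⟨y, hy⟩ : (Gᶜ.neighborSet v)) ∉ Aset) := by
    intro x y hx hy hadj
    exact hA (show (Gᶜ.induce (Gᶜ.neighborSet v)).Adj ⟨x, hx⟩ ⟨y, hy⟩ from hadj)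
  have hcl1 : ∀ x ∈ A1, ∀ y ∈ A1, x ≠ y → G.Adj x y := by
    intro x hx y hy hne
    by_contra hnadj
    have hxm := Finset.mem_filter.mp hx
    have hym := Finset.mem_filter.mp hy
    obtain ⟨hxv, hxA⟩ := hxm.2
    obtain ⟨hyv, hyA⟩ := hym.2
    exact ((hiff x y hxv hyv ⟨hne, hnadj⟩).mp hxA) hyA
  have hcl2 : ∀ x ∈ A2, ∀ y ∈ A2, x ≠ y → G.Adj x y := by
    intro x hx y hy hne
    by_contra hnadj
    have hxm := Finset.mem_sdiff.mp hx
    have hym := Finset.mem_sdiff.mp hy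
    have hxv : Gᶜ.Adj v x := by
      have := hxm.1; rw [hS, mem_neighborFinset] at this; exact this
    have hyv : Gᶜ.Adj v y := by
      have := hym.1; rw [hS, mem_neighborFinset] at this; exact this
    have hxA : (⟨x, hxv⟩ : (Gᶜ.neighborSet v)) ∉ Aset := by
      intro hc
      exact hxm.2 (Finset.mem_filter.mpr ⟨hxm.1, hxv, hc⟩)
    have hyA : (⟨y, hyv⟩ : (Gᶜ.neighborSet v)) ∉ Aset := by
      intro hc
      exact hym.2 (Finset.mem_filter.mpr ⟨hym.1, hyv, hc⟩)
    exact hyA (((hiff x y hxv hyv ⟨hne, hnadj⟩).not_left).mp (by simpa using hxA))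
  have hA12 : A1.card + A2.card = d := by
    rw [hA2def, add_comm]
    rw [Finset.card_sdiff_add_card_eq_card (Finset.filter_subset _ _)]
    exact hScard
  obtain ⟨A, hAS, hclA, hA2a⟩ : ∃ A : Finset (Fin (3*n+4)), A ⊆ S ∧
      (∀ x ∈ A, ∀ y ∈ A, x ≠ y → G.Adj x y) ∧ d ≤ 2*A.card := by
    rcases le_total A1.card A2.card with h | h
    · exact ⟨A2, Finset.sdiff_subset, hcl2, by omega⟩
    · exact ⟨A1, Finset.filter_subset _ _, hcl1, by omega⟩
  set a := A.card with haeq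
  have ha3 : 3 ≤ a := by omega
  -- a ≤ n+1
  have haub : a ≤ n+1 := by
    obtain ⟨x, hx, y, hy, hne⟩ := Finset.one_lt_card.mp (by omega : 1 < A.card)
    have hsub : (A.erase x).erase y ⊆ G.neighborFinset x ∩ G.neighborFinset y := by
      intro z hz
      have hzy : z ≠ y := (Finset.mem_erase.mp hz).1
      have hz' := (Finset.mem_erase.mp hz).2
      have hzx : z ≠ x := (Finset.mem_erase.mp hz').1
      have hzA : z ∈ A := (Finset.mem_erase.mp hz').2
      rw [Finset.mem_inter, mem_neighborFinset, mem_neighborFinset]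
      exact ⟨hclA x hx z hzA (Ne.symm hzx), hclA y hy z hzA (Ne.symm hzy)⟩
    have hcard2 : ((A.erase x).erase y).card = a - 2 := by
      rw [Finset.card_erase_of_mem (Finset.mem_erase.mpr ⟨hne.symm, hy⟩),
        Finset.card_erase_of_mem hx, ← haeq]
      omega
    have hlt := codeg G hG hne
    have := Finset.card_le_card hsub
    rw [hcard2] at this
    omega
  -- degree lower bound
  have hdeglow : ∀ w, 3*n+3 ≤ G.degree w + d := by
    intro w
    have h1 := hv w
    have h2 : Gᶜ.degree w = Fintype.card (Fin (3*n+4)) - 1 - G.degree w := degree_compl G w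
    have h3 := G.degree_lt_card_verts w
    rw [hcard] at h2 h3
    omega
  -- counting
  set W : Finset (Fin (3*n+4)) := Finset.univ \ A with hW
  have hWcard : W.card = 3*n+4 - a := by
    rw [hW, Finset.card_sdiff_of_subset (Finset.subset_univ _), Finset.card_univ, hcard]
  set c : Fin (3*n+4) → Fin (3*n+4) → ℕ :=
    fun u u' => (W.filter (fun w => G.Adj w u ∧ G.Adj w u')).card with hc
  set f : Fin (3*n+4) → ℕ := fun w => (A.filter (fun u => G.Adj w u)).card with hf
  set Y := ∑ w ∈ W, f w with hY
  set Z := ∑ w ∈ W, (f w)^2 with hZdef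
  -- basic identities
  have hcind : ∀ u u', c u u' = ∑ w ∈ W, (if G.Adj w u then 1 else 0) * (if G.Adj w u' then 1 else 0) := by
    intro u u'
    rw [hc]
    simp only
    rw [Finset.card_filter]
    apply Finset.sum_congr rfl
    intro w _
    by_cases h1 : G.Adj w u <;> by_cases h2 : G.Adj w u' <;> simp [h1, h2]
  have hfind : ∀ w, f w = ∑ u ∈ A, (if G.Adj w u then 1 else 0) := by
    intro w
    rw [hf]
    simp only
    rw [Finset.card_filter]
  have hswap : Y = ∑ u ∈ A, c u u := by
    rw [hY]
    calc ∑ w ∈ W, f w = ∑ w ∈ W, ∑ u ∈ A, (if G.Adj w u then 1 else 0) := by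
          exact Finset.sum_congr rfl (fun w _ => hfind w)
      _ = ∑ u ∈ A, ∑ w ∈ W, (if G.Adj w u then 1 else 0) := Finset.sum_comm
      _ = ∑ u ∈ A, c u u := by
          apply Finset.sum_congr rfl
          intro u _
          rw [hcind u u]
          apply Finset.sum_congr rfl
          intro w _
          by_cases h1 : G.Adj w u <;> simp [h1]
  have hZid : Z = ∑ u ∈ A, ∑ u' ∈ A, c u u' := by
    rw [hZdef]
    calc ∑ w ∈ W, (f w)^2
        = ∑ w ∈ W, ∑ u ∈ A, ∑ u' ∈ A, (if G.Adj w u then 1 else 0) * (if G.Adj w u' then 1 else 0) := by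
          apply Finset.sum_congr rfl
          intro w _
          rw [hfind w, sq, Finset.sum_mul_sum]
      _ = ∑ u ∈ A, ∑ w ∈ W, ∑ u' ∈ A, (if G.Adj w u then 1 else 0) * (if G.Adj w u' then 1 else 0) := Finset.sum_comm
      _ = ∑ u ∈ A, ∑ u' ∈ A, ∑ w ∈ W, (if G.Adj w u then 1 else 0) * (if G.Adj w u' then 1 else 0) := by
          exact Finset.sum_congr rfl (fun u _ => Finset.sum_comm)
      _ = ∑ u ∈ A, ∑ u' ∈ A, c u u' := by
          exact Finset.sum_congr rfl (fun u _ => Finset.sum_congr rfl (fun u' _ => (hcind u u').symm))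
  -- c u u in terms of degree
  have hcuu : ∀ u ∈ A, c u u + (a-1) = G.degree u := by
    intro u hu
    have h1 : W.filter (fun w => G.Adj w u ∧ G.Adj w u) = G.neighborFinset u \ A := by
      ext w
      constructor
      · intro hw
        have hw1 := (Finset.mem_filter.mp hw).1
        have hw2 := (Finset.mem_filter.mp hw).2.1
        rw [hW] at hw1
        refine Finset.mem_sdiff.mpr ⟨?_, (Finset.mem_sdiff.mp hw1).2⟩
        rw [mem_neighborFinset]
        exact hw2.symm
      · intro hw
        obtain ⟨hwn, hwA⟩ := Finset.mem_sdiff.mp hw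
        rw [mem_neighborFinset] at hwn
        refine Finset.mem_filter.mpr ⟨?_, hwn.symm, hwn.symm⟩
        rw [hW]
        exact Finset.mem_sdiff.mpr ⟨Finset.mem_univ _, hwA⟩
    have h2 : G.neighborFinset u ∩ A = A.erase u := by
      ext z
      simp only [Finset.mem_inter, mem_neighborFinset, Finset.mem_erase]
      constructor
      · rintro ⟨hadj, hzA⟩
        exact ⟨(G.ne_of_adj hadj).symm, hzA⟩
      · rintro ⟨hzu, hzA⟩
        exact ⟨hclA u hu z hzA (Ne.symm hzu), hzA⟩
    have h3 := Finset.card_inter_add_card_sdiff (G.neighborFinset u) A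
    rw [h2, Finset.card_erase_of_mem hu] at h3
    rw [hc]
    simp only
    rw [h1]
    rw [G.card_neighborFinset_eq_degree] at h3
    omega
  -- lower bound on Y
  have hY1 : (a:ℤ)*(3*n+4-(d:ℤ)-a) ≤ (Y:ℤ) := by
    have hterm : ∀ u ∈ A, (3*n+4-(d:ℤ)-a) ≤ (c u u : ℤ) := by
      intro u hu
      have h1 := hcuu u hu
      have h2 := hdeglow u
      have : (c u u : ℤ) = (G.degree u : ℤ) - (a - 1) := by
        have h1' : (c u u : ℤ) + ((a:ℤ) - 1) = (G.degree u : ℤ) := by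
          have := congrArg (fun k : ℕ => (k : ℤ)) h1
          push_cast [Nat.cast_sub (by omega : 1 ≤ a)] at this
          linarith
        linarith
      have h2' : (3*n+3 : ℤ) ≤ (G.degree u : ℤ) + d := by exact_mod_cast h2
      omega
    calc (a:ℤ)*(3*n+4-(d:ℤ)-a) = ∑ _u ∈ A, (3*n+4-(d:ℤ)-a) := by
          rw [Finset.sum_const, ← haeq]; ring
      _ ≤ ∑ u ∈ A, (c u u : ℤ) := Finset.sum_le_sum hterm
      _ = (Y:ℤ) := by rw [hswap]; push_cast; ring
  -- off-diagonal bound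
  have hoff : ∀ u ∈ A, ∀ u' ∈ A.erase u, c u u' ≤ n+1-a := by
    intro u hu u' hu'
    have hne : u' ≠ u := (Finset.mem_erase.mp hu').1
    have hu'A : u' ∈ A := (Finset.mem_erase.mp hu').2
    have hsub : W.filter (fun w => G.Adj w u ∧ G.Adj w u') ∪ (A.erase u).erase u'
        ⊆ G.neighborFinset u ∩ G.neighborFinset u' := by
      intro z hz
      rw [Finset.mem_union] at hz
      rcases hz with hz | hz
      · have := (Finset.mem_filter.mp hz).2
        rw [Finset.mem_inter, mem_neighborFinset, mem_neighborFinset]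
        exact ⟨this.1.symm, this.2.symm⟩
      · have hzu' : z ≠ u' := (Finset.mem_erase.mp hz).1
        have hz2 := (Finset.mem_erase.mp hz).2
        have hzu : z ≠ u := (Finset.mem_erase.mp hz2).1
        have hzA : z ∈ A := (Finset.mem_erase.mp hz2).2
        rw [Finset.mem_inter, mem_neighborFinset, mem_neighborFinset]
        exact ⟨hclA u hu z hzA (Ne.symm hzu), hclA u' hu'A z hzA (Ne.symm hzu')⟩
    have hdisj : Disjoint (W.filter (fun w => G.Adj w u ∧ G.Adj w u')) ((A.erase u).erase u') := by
      apply Finset.disjoint_left.mpr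
      intro z hz hz'
      have hzW : z ∈ W := (Finset.mem_filter.mp hz).1
      have hzA : z ∈ A := (Finset.mem_erase.mp ((Finset.mem_erase.mp hz').2)).2
      rw [hW, Finset.mem_sdiff] at hzW
      exact hzW.2 hzA
    have hcards : c u u' + (a - 2) ≤ (G.neighborFinset u ∩ G.neighborFinset u').card := by
      have := Finset.card_le_card hsub
      rw [Finset.card_union_of_disjoint hdisj] at this
      have hc2 : ((A.erase u).erase u').card = a - 2 := by
        rw [Finset.card_erase_of_mem (Finset.mem_erase.mpr ⟨hne, hu'A⟩),
          Finset.card_erase_of_mem hu, ← haeq]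
        omega
      rw [hc2] at this
      exact this
    have hlt := codeg G hG (hne.symm : u ≠ u')
    omega
  -- upper bound on Z
  have hZ2 : Z ≤ Y + a*((a-1)*(n+1-a)) := by
    rw [hZid, hswap]
    have : ∀ u ∈ A, ∑ u' ∈ A, c u u' ≤ c u u + (a-1)*(n+1-a) := by
      intro u hu
      rw [← Finset.add_sum_erase A (c u) hu]
      have : ∑ u' ∈ A.erase u, c u u' ≤ (a-1)*(n+1-a) := by
        calc ∑ u' ∈ A.erase u, c u u' ≤ ∑ _u' ∈ A.erase u, (n+1-a) :=
              Finset.sum_le_sum (hoff u hu)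
          _ = (a-1)*(n+1-a) := by rw [Finset.sum_const, Finset.card_erase_of_mem hu, smul_eq_mul]
      omega
    calc ∑ u ∈ A, ∑ u' ∈ A, c u u' ≤ ∑ u ∈ A, (c u u + (a-1)*(n+1-a)) :=
          Finset.sum_le_sum this
      _ = (∑ u ∈ A, c u u) + a*((a-1)*(n+1-a)) := by
          rw [Finset.sum_add_distrib, Finset.sum_const, ← haeq, smul_eq_mul]
  -- Cauchy-Schwarz
  have hCS : (Y:ℤ)^2 ≤ (W.card:ℤ) * (Z:ℤ) := by
    have h := sq_sum_le_card_mul_sum_sq (s := W) (f := fun w => ((f w : ℤ)))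
    have h1 : ((Y:ℕ):ℤ) = ∑ w ∈ W, ((f w : ℤ)) := by rw [hY]; push_cast; ring
    have h2 : ((Z:ℕ):ℤ) = ∑ w ∈ W, ((f w : ℤ))^2 := by rw [hZdef]; push_cast; ring
    rw [h1, h2]
    exact_mod_cast h
  -- final contradiction
  have hkey := keyArith ((n:ℤ)+1) (d:ℤ) (a:ℤ)
    (by exact_mod_cast by omega : (5:ℤ) ≤ (n:ℤ)+1)
    (by exact_mod_cast hd1)
    (by push_cast; omega)
    (by exact_mod_cast by omega : (d:ℤ) ≤ 2*(a:ℤ))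
    (by exact_mod_cast haub)
  obtain ⟨hkey1, hkey2⟩ := hkey
  set X : ℤ := (a:ℤ)*(3*((n:ℤ)+1)+1-(d:ℤ)-(a:ℤ)) with hX
  set Nw : ℤ := 3*((n:ℤ)+1)+1-(a:ℤ) with hNw
  have hNwcard : (W.card : ℤ) = Nw := by
    rw [hWcard, hNw]
    push_cast [Nat.cast_sub (by omega : a ≤ 3*n+4)]
    ring
  have hYX : X ≤ (Y:ℤ) := by
    rw [hX]
    calc (a:ℤ)*(3*((n:ℤ)+1)+1-(d:ℤ)-(a:ℤ)) = (a:ℤ)*(3*n+4-(d:ℤ)-a) := by ring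
      _ ≤ (Y:ℤ) := hY1
  have hNwX : Nw ≤ X := hkey2
  have hNwpos : (0:ℤ) ≤ Nw := by rw [hNw]; push_cast; omega
  have hmono : X*(X-Nw) ≤ (Y:ℤ)*((Y:ℤ)-Nw) := by nlinarith [hYX, hNwX, hNwpos]
  have hZint : (Z:ℤ) ≤ (Y:ℤ) + (a:ℤ)*((a:ℤ)-1)*((n:ℤ)+1-(a:ℤ)) := by
    have := hZ2
    have hcast : ((Z:ℕ):ℤ) ≤ ((Y:ℕ):ℤ) + ((a*((a-1)*(n+1-a)) : ℕ) : ℤ) := by exact_mod_cast this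
    push_cast [Nat.cast_sub (by omega : 1 ≤ a), Nat.cast_sub (by omega : a ≤ n+1)] at hcast
    linarith
  have hkey1' : Nw * ((a:ℤ)*((a:ℤ)-1)*((n:ℤ)+1-(a:ℤ))) < X*(X-Nw) := by
    rw [hNw, hX]
    convert hkey1 using 2 <;> ring
  have hfinal : (Y:ℤ)^2 < (Y:ℤ)^2 := by
    calc (Y:ℤ)^2 ≤ (W.card:ℤ) * (Z:ℤ) := hCS
      _ = Nw * (Z:ℤ) := by rw [hNwcard]
      _ ≤ Nw * ((Y:ℤ) + (a:ℤ)*((a:ℤ)-1)*((n:ℤ)+1-(a:ℤ))) := by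
          apply mul_le_mul_of_nonneg_left hZint hNwpos
      _ = Nw * (Y:ℤ) + Nw * ((a:ℤ)*((a:ℤ)-1)*((n:ℤ)+1-(a:ℤ))) := by ring
      _ < Nw * (Y:ℤ) + X*(X-Nw) := by linarith [hkey1']
      _ ≤ Nw * (Y:ℤ) + (Y:ℤ)*((Y:ℤ)-Nw) := by linarith [hmono]
      _ = (Y:ℤ)^2 := by ring
  exact absurd hfinal (lt_irrefl _)
end

section
/- Let n ≥ 1 be an integer and let G be a graph on 3n + 4 vertices that contains no copy of K_{2,n}. Let v be a vertex whose degree in the complement G̅ equals the maximum degree Δ(G̅), and suppose Δ(G̅) = (3/2)(n + 1) + t for some integer t with 0 ≤ t ≤ 3. If the subgraph H̅ of G̅ induced on N_{G̅}(v) is bipartite with bipartition A ⊔ B where |A| ≥ |B|, then |A| ≤ (3/4)(n + 1) + 4. -/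
open SimpleGraph

/-!
`A` is a clique of `G` avoiding the `G`-neighbourhood of `v`, so the neighbours of `x ∈ A` lie in
`A` or in the set `U` of the `3n + 3 - |A|` remaining vertices, and the degree condition gives
each `x ∈ A` many neighbours in `U`. Two vertices of `A` already share the `|A| - 2` other vertices
of `A` as common neighbours, so `K_{2,n}`-freeness leaves them at most `n + 1 - |A|` common
neighbours in `U`. Counting the pairs `({x, y}, u)` with `x, y ∈ A` adjacent to `u ∈ U` and applying
Cauchy–Schwarz makes these two bounds incompatible once `4|A| ≥ 3n + 21`; since `Δ(G̅)` is an
integer, `n` is odd and this is exactly the negation of the claim.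
-/

open Finset

lemma sq_sum_card_filter_le_card_mul {α β : Type*} (A : Finset α) (U : Finset β)
    (r : α → β → Prop) [∀ x u, Decidable (r x u)] :
    (∑ x ∈ A, #{u ∈ U | r x u}) ^ 2 ≤ #U * ∑ x ∈ A, ∑ y ∈ A, #{u ∈ U | r x u ∧ r y u} := by
  calc (∑ x ∈ A, #{u ∈ U | r x u}) ^ 2 = (∑ u ∈ U, #{x ∈ A | r x u}) ^ 2 := by
        congr 1; exact sum_card_bipartiteAbove_eq_sum_card_bipartiteBelow r
    _ ≤ #U * ∑ u ∈ U, #{x ∈ A | r x u} ^ 2 := sq_sum_le_card_mul_sum_sq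
    _ = #U * ∑ x ∈ A, ∑ y ∈ A, #{u ∈ U | r x u ∧ r y u} := by
        simp only [card_filter, sq, sum_mul_sum, ite_zero_mul_ite_zero, mul_one]
        rw [sum_comm]
        simp only [sum_comm (s := U)]

/-- The substitution `u = 4a - 3n - 21`, `m = n + 1 - a` turns the defect in the final inequality
into `a` times a polynomial in `u, m` with nonnegative coefficients. -/
lemma four_mul_lt_of_counting_bounds {n a Δ S M : ℕ} (han : a ≤ n + 1) (hΔ : 2 * Δ ≤ 3 * n + 9)
    (hM : M + a = 3 * n + 3) (hS : a * (3 * n + 3) ≤ a * Δ + a * (a - 1) + S)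
    (hCS : S ^ 2 ≤ M * (S + a * (a - 1) * (n + 1 - a))) :
    4 * a < 3 * n + 21 := by
  by_contra! ha
  have ha1 : 1 ≤ a := by omega
  zify [ha1, han] at hS hCS
  have hM' : (M : ℤ) = 3 * n + 3 - a := by omega
  have hΔ' : (2 * Δ : ℤ) ≤ 3 * n + 9 := by exact_mod_cast hΔ
  set k : ℤ := 3 * n - 1 - 2 * a
  have hk : a * k ≤ 2 * S := by nlinarith
  have hMk : 2 * (M : ℤ) ≤ a * k := by nlinarith
  have key : 4 * M * a * (a - 1) * (n + 1 - a) < a * k * (a * k - 2 * M) := by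
    obtain ⟨u, hu⟩ : ∃ u : ℕ, (u : ℤ) = 4 * a - 3 * n - 21 := ⟨4 * a - 3 * n - 21, by omega⟩
    obtain ⟨m, hm⟩ : ∃ m : ℕ, (m : ℤ) = n + 1 - a := ⟨n + 1 - a, by omega⟩
    have hdefect : a * k * (a * k - 2 * M) - 4 * M * a * (a - 1) * (n + 1 - a) =
        a * (2520 + 480 * m + 572 * u + 146 * u * m + 12 * u * m ^ 2 + 42 * u ^ 2
          + 7 * u ^ 2 * m + u ^ 3) := by
      rw [hu, hm, hM']; ring
    have hpos : (0 : ℤ) < a * (2520 + 480 * m + 572 * u + 146 * u * m + 12 * u * m ^ 2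
        + 42 * u ^ 2 + 7 * u ^ 2 * m + u ^ 3) := by positivity
    linarith
  -- `S ↦ S (S - M)` is increasing on `[M / 2, ∞)` and `S ≥ a k / 2 ≥ M`
  nlinarith [mul_nonneg (sub_nonneg.mpr hk) (show (0 : ℤ) ≤ 2 * S + a * k - 2 * M by linarith)]

variable {V : Type*} [Fintype V] [DecidableEq V] {G : SimpleGraph V} [DecidableRel G.Adj]

lemma card_inter_neighborFinset_lt {n : ℕ}
    (hG : ¬ ContainsCopy G (completeBipartiteGraph (Fin 2) (Fin n))) {x y : V} (hxy : x ≠ y) :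
    #(G.neighborFinset x ∩ G.neighborFinset y) < n := by
  by_contra! h
  obtain ⟨s, hs, hcard⟩ := exists_subset_card_eq h
  obtain ⟨f⟩ : completeBipartiteGraph (Fin 2) (Fin n) ⊑ G := by
    refine completeBipartiteGraph_isContained_iff.mpr
      ⟨{x, y}, s, by simp [hxy], by simp [hcard], fun w hw z hz => ?_⟩
    have hz := hs hz
    simp only [coe_insert, coe_singleton, Set.mem_insert_iff, Set.mem_singleton_iff] at hw
    simp only [mem_inter, mem_neighborFinset] at hz
    rcases hw with rfl | rfl
    exacts [hz.1, hz.2]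
  exact hG ⟨f.toHom, f.injective⟩

section Clique

variable {n : ℕ} {A U : Finset V}

lemma card_filter_adj_adj_add_card_le
    (hG : ¬ ContainsCopy G (completeBipartiteGraph (Fin 2) (Fin n)))
    (hA : G.IsClique (A : Set V)) (hAU : Disjoint A U) {x y : V} (hx : x ∈ A) (hy : y ∈ A)
    (hxy : x ≠ y) :
    #{u ∈ U | G.Adj x u ∧ G.Adj y u} + #A ≤ n + 1 := by
  have hxyA : {x, y} ⊆ A := insert_subset hx (singleton_subset_iff.mpr hy)
  have hsub : A \ {x, y} ∪ {u ∈ U | G.Adj x u ∧ G.Adj y u} ⊆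
      G.neighborFinset x ∩ G.neighborFinset y := by
    intro w hw
    simp only [mem_union, mem_sdiff, mem_insert, mem_singleton, not_or, mem_filter] at hw
    simp only [mem_inter, mem_neighborFinset]
    rcases hw with ⟨hwA, hwx, hwy⟩ | ⟨-, hw⟩
    exacts [⟨hA hx hwA (Ne.symm hwx), hA hy hwA (Ne.symm hwy)⟩, hw]
  have hdisj : Disjoint (A \ {x, y}) {u ∈ U | G.Adj x u ∧ G.Adj y u} :=
    hAU.mono sdiff_subset (filter_subset _ _)
  have hcard := card_le_card hsub
  rw [card_union_of_disjoint hdisj, card_sdiff_of_subset hxyA, card_pair hxy] at hcard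
  have := card_inter_neighborFinset_lt hG hxy
  omega

lemma sum_sum_card_filter_adj_adj_le
    (hG : ¬ ContainsCopy G (completeBipartiteGraph (Fin 2) (Fin n)))
    (hA : G.IsClique (A : Set V)) (hAU : Disjoint A U) :
    ∑ x ∈ A, ∑ y ∈ A, #{u ∈ U | G.Adj x u ∧ G.Adj y u} ≤
      ∑ x ∈ A, #{u ∈ U | G.Adj x u} + #A * (#A - 1) * (n + 1 - #A) := by
  rw [mul_assoc, ← smul_eq_mul, ← sum_const, ← sum_add_distrib]
  refine sum_le_sum fun x hx => ?_
  rw [← add_sum_erase A _ hx]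
  simp only [and_self]
  gcongr
  calc ∑ y ∈ A.erase x, #{u ∈ U | G.Adj x u ∧ G.Adj y u}
      ≤ ∑ _y ∈ A.erase x, (n + 1 - #A) := sum_le_sum fun y hy => by
        have := card_filter_adj_adj_add_card_le hG hA hAU hx (mem_of_mem_erase hy)
          (ne_of_mem_erase hy).symm
        omega
    _ = (#A - 1) * (n + 1 - #A) := by rw [sum_const, card_erase_of_mem hx, smul_eq_mul]

end Clique

lemma degree_le_card_sub_one_add_card_filter {A U : Finset V} {x : V} (hx : x ∈ A)
    (hN : ∀ w, G.Adj x w → w ∈ A ∨ w ∈ U) : G.degree x ≤ #A - 1 + #{u ∈ U | G.Adj x u} := by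
  rw [← card_neighborFinset_eq_degree, ← card_erase_of_mem hx]
  refine (card_le_card fun w hw => ?_).trans (card_union_le _ _)
  rw [mem_neighborFinset] at hw
  rcases hN w hw with h | h
  · exact mem_union_left _ (mem_erase.mpr ⟨(G.ne_of_adj hw).symm, h⟩)
  · exact mem_union_right _ (mem_filter.mpr ⟨h, hw⟩)

theorem four_mul_card_lt_of_isClique {n : ℕ}
    (hG : ¬ ContainsCopy G (completeBipartiteGraph (Fin 2) (Fin n)))
    (hV : Fintype.card V = 3 * n + 4) {v : V} (hv : ∀ w, Gᶜ.degree w ≤ Gᶜ.degree v)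
    (hΔ : 2 * Gᶜ.degree v ≤ 3 * n + 9) {A : Finset V} (hA : G.IsClique (A : Set V))
    (hvA : ∀ x ∈ A, Gᶜ.Adj v x) :
    4 * #A < 3 * n + 21 := by
  rcases lt_or_ge #A 2 with hA2 | hA2
  · omega
  obtain ⟨x₀, hx₀, y₀, hy₀, hxy₀⟩ := one_lt_card.mp hA2
  set U : Finset V := (insert v A)ᶜ
  have hv_notMem : v ∉ A := fun h => Gᶜ.loopless.irrefl v (hvA v h)
  have hAU : Disjoint A U := disjoint_compl_right_iff.mpr (subset_insert v A)
  have hU : #U + #A = 3 * n + 3 := by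
    rw [card_compl, card_insert_of_notMem hv_notMem, hV]
    have : #A + 1 ≤ 3 * n + 4 := hV ▸ card_insert_of_notMem hv_notMem ▸ card_le_univ _
    omega
  have hN : ∀ x ∈ A, ∀ w, G.Adj x w → w ∈ A ∨ w ∈ U := fun x hx w hw => by
    by_cases hwA : w ∈ A
    · exact .inl hwA
    · refine .inr (mem_compl.mpr fun hw' => ?_)
      rcases mem_insert.mp hw' with rfl | h
      exacts [((G.compl_adj w x).mp (hvA x hx)).2 hw.symm, hwA h]
  have hdeg : ∀ x ∈ A, 3 * n + 3 ≤ Gᶜ.degree v + (#A - 1) + #{u ∈ U | G.Adj x u} := by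
    intro x hx
    have := G.degree_compl (v := x)
    have := G.degree_lt_card_verts x
    have := degree_le_card_sub_one_add_card_filter hx (hN x hx)
    have := hv x
    omega
  have hS : #A * (3 * n + 3) ≤
      #A * Gᶜ.degree v + #A * (#A - 1) + ∑ x ∈ A, #{u ∈ U | G.Adj x u} :=
    calc #A * (3 * n + 3) = ∑ _x ∈ A, (3 * n + 3) := by rw [sum_const, smul_eq_mul]
      _ ≤ ∑ x ∈ A, (Gᶜ.degree v + (#A - 1) + #{u ∈ U | G.Adj x u}) := sum_le_sum hdeg
      _ = _ := by rw [sum_add_distrib, sum_const, smul_eq_mul, mul_add]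
  have hCS := (sq_sum_card_filter_le_card_mul A U G.Adj).trans
    (Nat.mul_le_mul_left #U (sum_sum_card_filter_adj_adj_le hG hA hAU))
  have han := card_filter_adj_adj_add_card_le hG hA hAU (U := U) hx₀ hy₀ hxy₀
  exact four_mul_lt_of_counting_bounds (by omega) hΔ hU hS hCS

theorem statement9_general (n : ℕ) (t : ℕ) (ht : t ≤ 3)
    (G : SimpleGraph (Fin (3 * n + 4))) [DecidableRel G.Adj]
    (hG : ¬ ContainsCopy G (completeBipartiteGraph (Fin 2) (Fin n)))
    (v : Fin (3 * n + 4)) (hv : ∀ w, Gᶜ.degree w ≤ Gᶜ.degree v)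
    (hdeg : (Gᶜ.degree v : ℝ) = (3 / 2 : ℝ) * (n + 1) + t)
    (A B : Finset (Fin (3 * n + 4)))
    (hcover : A ∪ B = Gᶜ.neighborFinset v)
    (hAind : ∀ x ∈ A, ∀ y ∈ A, ¬ Gᶜ.Adj x y) :
    (A.card : ℝ) ≤ (3 / 4 : ℝ) * (n + 1) + 4 := by
  have hA : G.IsClique (A : Set _) := fun x hx y hy hxy =>
    by_contra fun h => hAind x hx y hy ((G.compl_adj x y).mpr ⟨hxy, h⟩)
  have hvA : ∀ x ∈ A, Gᶜ.Adj v x := fun x hx =>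
    (mem_neighborFinset _ _ _).mp (hcover ▸ mem_union_left B hx)
  have hΔ : 2 * Gᶜ.degree v = 3 * n + 3 + 2 * t := by
    have : ((2 * Gᶜ.degree v : ℕ) : ℝ) = ((3 * n + 3 + 2 * t : ℕ) : ℝ) := by
      push_cast; linarith
    exact_mod_cast this
  have hlt := four_mul_card_lt_of_isClique hG (Fintype.card_fin _) hv (by omega) hA hvA
  -- `hΔ` makes `n` odd, which excludes `4 |A| = 3n + 20`
  have hle : ((4 * #A : ℕ) : ℝ) ≤ ((3 * n + 19 : ℕ) : ℝ) := by exact_mod_cast (by omega)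
  push_cast at hle
  linarith

/-- Let `n ≥ 1` and let `G` be a graph on `3n+4` vertices containing no copy of `K_{2,n}`.
Let `v` be a vertex of maximum degree in `G̅` with `Δ(G̅) = (3/2)(n+1) + t` for some
`0 ≤ t ≤ 3`. If the subgraph of `G̅` induced on `N_{G̅}(v)` is bipartite with bipartition
`A ⊔ B` where `|A| ≥ |B|`, then `|A| ≤ (3/4)(n+1) + 4`. -/
theorem statement9 (n : ℕ) (hn : 1 ≤ n) (t : ℕ) (ht : t ≤ 3)
    (G : SimpleGraph (Fin (3 * n + 4))) [DecidableRel G.Adj]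
    (hG : ¬ ContainsCopy G (completeBipartiteGraph (Fin 2) (Fin n)))
    (v : Fin (3 * n + 4)) (hv : ∀ w, Gᶜ.degree w ≤ Gᶜ.degree v)
    (hdeg : (Gᶜ.degree v : ℝ) = (3 / 2 : ℝ) * (n + 1) + t)
    (A B : Finset (Fin (3 * n + 4)))
    (hdisj : Disjoint A B) (hcover : A ∪ B = Gᶜ.neighborFinset v)
    (hAind : ∀ x ∈ A, ∀ y ∈ A, ¬ Gᶜ.Adj x y)
    (hBind : ∀ x ∈ B, ∀ y ∈ B, ¬ Gᶜ.Adj x y)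
    (hsize : B.card ≤ A.card) :
    (A.card : ℝ) ≤ (3 / 4 : ℝ) * (n + 1) + 4 :=
  statement9_general n t ht G hG v hv hdeg A B hcover hAind
end

section
/- Let G be a connected graph and H a graph with at least one edge such that |V(G)| ≥ σ(H), where σ(H) is the smallest size of a colour class in a proper colouring of H with χ(H) colours. Then R(G, H) ≥ (|V(G)| − 1)(χ(H) − 1) + σ(H); that is, there exists a graph on (|V(G)| − 1)(χ(H) − 1) + σ(H) − 1 vertices containing no copy of G whose complement contains no copy of H. -/
open SimpleGraph

/-!
Burr's construction. Split `(|V(G)| - 1)(χ(H) - 1) + σ(H) - 1` vertices into `χ(H) - 1` blocks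
of size `|V(G)| - 1` and one block of size `σ(H) - 1`, and let `Γ` be the disjoint union of
cliques on the blocks. A connected `G` would have to sit inside a single clique, which is too
small. A copy of `H` in `Γᶜ` would colour `H` properly by blocks with `χ(H)` colours, one of
whose classes has fewer than `σ(H)` vertices.
-/

open Finset

section ClusterGraph

variable {α ι V W : Type*}

def clusterGraph (b : α → ι) : SimpleGraph α :=
  SimpleGraph.fromRel fun x y => b x = b y

@[simp]
theorem clusterGraph_adj {b : α → ι} {x y : α} :
    (clusterGraph b).Adj x y ↔ x ≠ y ∧ b x = b y := by
  simp [clusterGraph, eq_comm]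

theorem SimpleGraph.Reachable.apply_eq {G : SimpleGraph V} {g : V → ι}
    (hg : ∀ ⦃u v⦄, G.Adj u v → g u = g v) {u v : V} (h : G.Reachable u v) : g u = g v := by
  obtain ⟨p⟩ := h
  induction p with
  | nil => rfl
  | cons huv _ ih => exact (hg huv).trans ih

variable [Fintype α] [DecidableEq ι]

theorem not_containsCopy_clusterGraph [Fintype V] {G : SimpleGraph V} (hG : G.Connected)
    {b : α → ι} (hb : ∀ i, #{x | b x = i} < Fintype.card V) :
    ¬ ContainsCopy (clusterGraph b) G := by
  rintro ⟨f, hf⟩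
  obtain ⟨v₀⟩ := hG.nonempty
  have hconst (v : V) : b (f v) = b (f v₀) :=
    (hG.preconnected v v₀).apply_eq fun _ _ huv => (clusterGraph_adj.1 (f.map_adj huv)).2
  have hcard : Fintype.card V ≤ #{x | b x = b (f v₀)} :=
    card_le_card_of_injOn f (fun v _ => by simp [hconst v]) hf.injOn
  exact (hb _).not_ge hcard

theorem not_containsCopy_compl_clusterGraph [Fintype W] {H : SimpleGraph W} {s : ℕ}
    (hs : ∀ C : H.Coloring ι, ∀ i, s ≤ #{w | C w = i}) {b : α → ι} {i : ι}
    (hb : #{x | b x = i} < s) :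
    ¬ ContainsCopy (clusterGraph b)ᶜ H := by
  rintro ⟨f, hf⟩
  let C : H.Coloring ι := Coloring.mk (b ∘ f) fun huv hbf => by
    obtain ⟨hne, hnadj⟩ := (compl_adj _ _ _).1 (f.map_adj huv)
    exact hnadj (clusterGraph_adj.2 ⟨hne, hbf⟩)
  have hcard : #{w | C w = i} ≤ #{x | b x = i} :=
    card_le_card_of_injOn f (fun w hw => mem_filter.2 ⟨mem_univ _, (mem_filter.1 hw).2⟩) hf.injOn
  exact (hs C i).not_gt (hcard.trans_lt hb)

end ClusterGraph

theorem Fintype.exists_card_fiber_le {α ι : Type*} [Fintype α] [Fintype ι] [DecidableEq ι]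
    (c : ι → ℕ) (h : Fintype.card α ≤ ∑ i, c i) :
    ∃ b : α → ι, ∀ i, #{x | b x = i} ≤ c i := by
  obtain ⟨e⟩ := Function.Embedding.nonempty_of_card_le (α := α) (β := Σ i, Fin (c i))
    (by simpa using h)
  refine ⟨fun x => (e x).1, fun i => ?_⟩
  have hfiber (p : Σ i, Fin (c i)) (hp : p.1 = i) :
      p ∈ univ.map (Function.Embedding.sigmaMk (β := fun i => Fin (c i)) i) := by
    obtain ⟨j, y⟩ := p
    subst hp
    simp
  calc #{x | (e x).1 = i}
      ≤ #(univ.map (Function.Embedding.sigmaMk (β := fun i => Fin (c i)) i)) :=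
        card_le_card_of_injOn e (fun x hx => hfiber _ (mem_filter.1 hx).2) e.injective.injOn
    _ = c i := by simp

theorem statement12_general {V W : Type*} [Fintype V] [Fintype W]
    (G : SimpleGraph V) (H : SimpleGraph W)
    (hG : G.Connected)
    (k s : ℕ) (hk : H.chromaticNumber = k)
    (hs_min : ∀ C : H.Coloring (Fin k), ∀ i : Fin k,
      s ≤ (Finset.univ.filter fun w => C w = i).card)
    (hs_attained : ∃ C : H.Coloring (Fin k), ∃ i : Fin k,
      (Finset.univ.filter fun w => C w = i).card = s)
    (hVs : s ≤ Fintype.card V) :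
    ∃ Γ : SimpleGraph (Fin ((Fintype.card V - 1) * (k - 1) + s - 1)),
      ¬ ContainsCopy Γ G ∧ ¬ ContainsCopy Γᶜ H := by
  classical
  obtain ⟨C₀, i₀, hC₀⟩ := hs_attained
  have hs : 0 < s := by
    obtain ⟨w, hw⟩ := le_chromaticNumber_iff_forall_surjective.1 hk.ge C₀ i₀
    exact hC₀ ▸ card_pos.2 ⟨w, by simp [hw]⟩
  have hV : 1 ≤ Fintype.card V := Fintype.card_pos_iff.2 hG.nonempty
  let c := Function.update (fun _ : Fin k => Fintype.card V - 1) i₀ (s - 1)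
  have hsum : ∑ j, c j = s - 1 + (k - 1) * (Fintype.card V - 1) := by
    simp [c, sum_update_of_mem (mem_univ i₀), card_sdiff]
  have hN : Fintype.card (Fin ((Fintype.card V - 1) * (k - 1) + s - 1)) ≤ ∑ j, c j := by
    rw [hsum, Fintype.card_fin, mul_comm]
    omega
  obtain ⟨b, hb⟩ := Fintype.exists_card_fiber_le c hN
  refine ⟨clusterGraph b, not_containsCopy_clusterGraph hG fun j => (hb j).trans_lt ?_,
    not_containsCopy_compl_clusterGraph hs_min ((hb i₀).trans_lt ?_)⟩
  · simp only [c, Function.update_apply]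
    split_ifs <;> omega
  · simpa [c] using hs

/-- Burr's lower bound: if `G` is connected, `H` has an edge, `|V(G)| ≥ σ(H)`, where
`σ(H)` is the smallest size of a colour class over all proper colourings of `H` with
`χ(H)` colours, then `R(G,H) ≥ (|V(G)| − 1)(χ(H) − 1) + σ(H)`; that is, there is a graph
on `(|V(G)| − 1)(χ(H) − 1) + σ(H) − 1` vertices containing no copy of `G` whose
complement contains no copy of `H`. -/
theorem statement12 {V W : Type*} [Fintype V] [Fintype W]
    (G : SimpleGraph V) (H : SimpleGraph W)
    (hG : G.Connected) (hH : ∃ x y, H.Adj x y)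
    (k s : ℕ) (hk : H.chromaticNumber = k)
    (hs_min : ∀ C : H.Coloring (Fin k), ∀ i : Fin k,
      s ≤ (Finset.univ.filter fun w => C w = i).card)
    (hs_attained : ∃ C : H.Coloring (Fin k), ∃ i : Fin k,
      (Finset.univ.filter fun w => C w = i).card = s)
    (hVs : s ≤ Fintype.card V) :
    ∃ Γ : SimpleGraph (Fin ((Fintype.card V - 1) * (k - 1) + s - 1)),
      ¬ ContainsCopy Γ G ∧ ¬ ContainsCopy Γᶜ H :=
  statement12_general G H hG k s hk hs_min hs_attained hVs
end

section
/- Let k ≥ 2 be an integer and let G be a graph with |V(G)| ≥ k and minimum degree δ(G) ≥ |V(G)|/k + k. Then there exist an integer s < k and a set U ⊆ V(G) with |U| ≤ s − 1 such that G − U is the disjoint union of s vertex-disjoint 2-connected graphs. -/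
/-!
Every component of `G − U` contains a vertex `x` together with its neighbours outside `U`, so it
has at least `δ(G) + 1 − |U|` vertices. With `δ(G) ≥ n/k + k` this leaves room for fewer than `k`
components whenever `|U| < k`, each with at least three vertices once `|U| ≤ k − 2`.
Now take `U` with `|U| < k` and more than `|U|` components in `G − U` (such as `U = ∅`), with
`|U|` maximal. If some component of `G − U` were not 2-connected, adding one of its cut vertices
to `U` would create at least one new component, contradicting maximality.
-/

open SimpleGraph

/-- A graph is 2-connected if it has at least 3 vertices and remains connected after the
deletion of any single vertex. -/
def TwoConnected {α : Type*} [Fintype α] (G : SimpleGraph α) : Prop :=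
  3 ≤ Fintype.card α ∧ ∀ v : α, (G.induce {u | u ≠ v}).Connected

open Finset

namespace SimpleGraph

variable {V : Type*}

/-- `G − U`, with the vertices of `U` kept as isolated vertices so that the graph stays on `V`. -/
def isolate (G : SimpleGraph V) (U : Set V) : SimpleGraph V where
  Adj x y := G.Adj x y ∧ x ∉ U ∧ y ∉ U
  symm := ⟨fun _ _ h => ⟨h.1.symm, h.2.2, h.2.1⟩⟩
  loopless := ⟨fun _ h => G.loopless.irrefl _ h.1⟩

@[simp]
theorem isolate_adj {G : SimpleGraph V} {U : Set V} {x y : V} :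
    (G.isolate U).Adj x y ↔ G.Adj x y ∧ x ∉ U ∧ y ∉ U :=
  Iff.rfl

variable (G : SimpleGraph V)

instance [DecidableRel G.Adj] (U : Set V) [DecidablePred (· ∈ U)] :
    DecidableRel (G.isolate U).Adj :=
  fun x y => inferInstanceAs (Decidable (G.Adj x y ∧ x ∉ U ∧ y ∉ U))

theorem isolate_anti : Antitone G.isolate :=
  fun _ _ h _ _ hxy => ⟨hxy.1, fun hx => hxy.2.1 (h hx), fun hy => hxy.2.2 (h hy)⟩

variable {G}

theorem notMem_of_isolate_reachable {U : Set V} {x y : V} (hx : x ∉ U)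
    (h : (G.isolate U).Reachable x y) : y ∉ U := by
  obtain rfl | hxy := eq_or_ne x y
  · exact hx
  · obtain ⟨z, hyz⟩ := mem_support_of_reachable hxy.symm h.symm
    exact (isolate_adj.1 hyz).2.1

theorem reachable_induce_supp_of_isolate_insert {U : Set V}
    {c : (G.isolate U).ConnectedComponent} {v : c.supp} {a b : V}
    (h : (G.isolate (insert (v : V) U)).Reachable a b) (ha : a ∈ c.supp) (hav : ⟨a, ha⟩ ≠ v)
    (hb : b ∈ c.supp) (hbv : ⟨b, hb⟩ ≠ v) :
    ((G.induce c.supp).induce {u | u ≠ v}).Reachable ⟨⟨a, ha⟩, hav⟩ ⟨⟨b, hb⟩, hbv⟩ := by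
  obtain ⟨p⟩ := h
  induction p with
  | nil => rfl
  | @cons a z b h p ih =>
    have hz : z ∈ c.supp :=
      (c.mem_supp_congr_adj (G.isolate_anti (Set.subset_insert _ U) h)).1 ha
    have hzv : (⟨z, hz⟩ : c.supp) ≠ v := fun hzv =>
      (isolate_adj.1 h).2.2 (by simp [← hzv])
    exact Adj.reachable (G := (G.induce c.supp).induce {u | u ≠ v})
      (u := ⟨⟨a, ha⟩, hav⟩) (v := ⟨⟨z, hz⟩, hzv⟩) (isolate_adj.1 h).1 |>.trans (ih hz hzv hb hbv)

variable [Fintype V] [DecidableEq V]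

variable (G) in
noncomputable def componentsOutside (U : Finset V) : Finset (G.isolate U).ConnectedComponent :=
  by classical exact (Uᶜ).image (G.isolate U).connectedComponentMk

theorem mem_componentsOutside {U : Finset V} {c : (G.isolate U).ConnectedComponent} :
    c ∈ G.componentsOutside U ↔ ∃ x ∉ U, (G.isolate U).connectedComponentMk x = c := by
  classical
  simp [componentsOutside]

theorem notMem_of_mem_componentsOutside {U : Finset V} {c : (G.isolate U).ConnectedComponent}
    (hc : c ∈ G.componentsOutside U) {y : V} (hy : y ∈ c.supp) : y ∉ U := by
  obtain ⟨x, hx, rfl⟩ := mem_componentsOutside.1 hc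
  exact notMem_of_isolate_reachable (by simpa using hx)
    (ConnectedComponent.exact hy).symm

theorem card_componentsOutside_lt_insert {U : Finset V} {v a b : V}
    (hv : ∀ c ∈ G.componentsOutside U, ∃ w ∈ c.supp, w ≠ v)
    (ha : a ∉ insert v U) (hb : b ∉ insert v U) (hab : (G.isolate U).Reachable a b)
    (hab' : ¬ (G.isolate ↑(insert v U)).Reachable a b) :
    #(G.componentsOutside U) < #(G.componentsOutside (insert v U)) := by
  -- Sending each component of `G − (U ∪ {v})` to the component of `G − U` containing it is
  -- surjective, but it merges the components of `a` and `b`.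
  let φ := ConnectedComponent.map (Hom.ofLE (G.isolate_anti (coe_subset.2 (subset_insert v U))))
  have hmaps : Set.MapsTo φ (G.componentsOutside (insert v U)) (G.componentsOutside U) := by
    intro c hc
    obtain ⟨x, hx, rfl⟩ := mem_componentsOutside.1 hc
    exact mem_componentsOutside.2 ⟨x, fun h => hx (mem_insert_of_mem h), rfl⟩
  have hsurj : Set.SurjOn φ (G.componentsOutside (insert v U)) (G.componentsOutside U) := by
    intro c hc
    obtain ⟨w, hw, hwv⟩ := hv c hc
    have hwU := notMem_of_mem_componentsOutside hc hw
    exact ⟨_, mem_componentsOutside.2 ⟨w, by simp [hwv, hwU], rfl⟩, hw⟩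
  have hninj : ¬ Set.InjOn φ (G.componentsOutside (insert v U)) := fun hinj =>
    hab' <| ConnectedComponent.exact <| hinj (mem_componentsOutside.2 ⟨a, ha, rfl⟩)
      (mem_componentsOutside.2 ⟨b, hb, rfl⟩) (ConnectedComponent.sound hab)
  by_contra! h
  exact hninj (injOn_of_surjOn_of_card_le φ hmaps hsurj h)

variable [DecidableRel G.Adj]

theorem degree_add_one_le_card_supp_add_card {U : Finset V} {x : V} (hx : x ∉ U) :
    G.degree x + 1 ≤ #((G.isolate U).connectedComponentMk x).supp.toFinset + #U := by
  have hsub : insert x (G.neighborFinset x \ U) ⊆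
      ((G.isolate U).connectedComponentMk x).supp.toFinset := by
    intro y hy
    simp only [Set.mem_toFinset, ConnectedComponent.mem_supp_iff]
    rcases mem_insert.1 hy with rfl | hy
    · rfl
    · obtain ⟨hxy, hyU⟩ := mem_sdiff.1 hy
      refine (ConnectedComponent.connectedComponentMk_eq_of_adj (isolate_adj.2 ?_)).symm
      exact ⟨(G.mem_neighborFinset x y).1 hxy, by simpa using hx, by simpa using hyU⟩
  have hx' : x ∉ G.neighborFinset x \ U := fun h => G.loopless.irrefl x
    ((G.mem_neighborFinset x x).1 (mem_sdiff.1 h).1)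
  calc G.degree x + 1 ≤ #(G.neighborFinset x \ U) + #U + 1 := by
        gcongr; exact card_le_card_sdiff_add_card
    _ = #(insert x (G.neighborFinset x \ U)) + #U := by rw [card_insert_of_notMem hx']; ring
    _ ≤ _ := by gcongr

theorem minDegree_add_one_le_card_supp_add_card {U : Finset V}
    {c : (G.isolate U).ConnectedComponent} (hc : c ∈ G.componentsOutside U) :
    G.minDegree + 1 ≤ #c.supp.toFinset + #U := by
  obtain ⟨x, hx, rfl⟩ := mem_componentsOutside.1 hc
  exact (Nat.succ_le_succ (G.minDegree_le_degree x)).trans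
    (degree_add_one_le_card_supp_add_card hx)

theorem card_componentsOutside_mul_le (U : Finset V) :
    #(G.componentsOutside U) * (G.minDegree + 1 - #U) ≤ Fintype.card V := by
  calc #(G.componentsOutside U) * (G.minDegree + 1 - #U)
      ≤ ∑ c ∈ G.componentsOutside U, #c.supp.toFinset := by
        rw [← smul_eq_mul, ← sum_const]
        refine sum_le_sum fun c hc => ?_
        have := minDegree_add_one_le_card_supp_add_card hc
        omega
    _ = #((G.componentsOutside U).biUnion fun c => c.supp.toFinset) := by
        refine (card_biUnion fun c _ d _ hcd => ?_).symm
        exact Set.disjoint_toFinset.2 (pairwise_disjoint_supp_connectedComponent _ hcd)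
    _ ≤ Fintype.card V := card_le_univ _

theorem card_componentsOutside_lt {k : ℕ}
    (hdeg : (Fintype.card V : ℝ) / k + k ≤ G.minDegree) {U : Finset V} (hU : #U < k) :
    #(G.componentsOutside U) < k := by
  -- `k` components with at least `n / k + 2` vertices each would need more than `n` vertices.
  by_contra! hks
  have hk : (0 : ℝ) < k := by exact_mod_cast (Nat.zero_le _).trans_lt hU
  have hsize : (Fintype.card V : ℝ) / k + 2 ≤ (G.minDegree + 1 - #U : ℕ) := by
    have : (#U : ℝ) + 1 ≤ k := by exact_mod_cast hU
    have : (0 : ℝ) ≤ Fintype.card V / k := by positivity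
    rw [Nat.cast_sub (by exact_mod_cast (show (#U : ℝ) ≤ G.minDegree + 1 by linarith))]
    push_cast
    linarith
  have hcount : (#(G.componentsOutside U) : ℝ) * (G.minDegree + 1 - #U : ℕ) ≤ Fintype.card V := by
    exact_mod_cast card_componentsOutside_mul_le U
  have hks' : (k : ℝ) ≤ #(G.componentsOutside U) := by exact_mod_cast hks
  have : (k : ℝ) * (Fintype.card V / k + 2) ≤ Fintype.card V :=
    (mul_le_mul hks' hsize (by positivity) (by positivity)).trans hcount
  rw [mul_add, mul_div_cancel₀ _ hk.ne'] at this
  linarith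

theorem exists_lt_card_componentsOutside_insert {U : Finset V}
    (hbig : ∀ c ∈ G.componentsOutside U, 3 ≤ #c.supp.toFinset)
    {c : (G.isolate U).ConnectedComponent} (hc : c ∈ G.componentsOutside U)
    (hnot : ¬ TwoConnected (G.induce c.supp)) :
    ∃ v ∉ U, #(G.componentsOutside U) < #(G.componentsOutside (insert v U)) := by
  have hcard : 3 ≤ Fintype.card c.supp := by rw [← Set.toFinset_card]; exact hbig c hc
  obtain ⟨v, hv⟩ : ∃ v : c.supp, ¬ ((G.induce c.supp).induce {u | u ≠ v}).Connected := by
    simpa using not_and.1 hnot hcard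
  have : Nonempty {u : c.supp | u ≠ v} := by
    obtain ⟨w, hwv⟩ := Fintype.exists_ne_of_one_lt_card (by omega) v
    exact ⟨⟨w, hwv⟩⟩
  obtain ⟨⟨⟨a, ha⟩, hav⟩, ⟨⟨b, hb⟩, hbv⟩, hab⟩ :
      ∃ x y, ¬ ((G.induce c.supp).induce {u | u ≠ v}).Reachable x y := by
    simpa [Preconnected] using fun h => hv ⟨h⟩
  have hvU : (v : V) ∉ U := notMem_of_mem_componentsOutside hc v.2
  refine ⟨v, hvU, card_componentsOutside_lt_insert (a := a) (b := b) ?_ ?_ ?_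
    (c.reachable_of_mem_supp ha hb) ?_⟩
  · intro c' hc'
    obtain ⟨w, hw, hwv⟩ := exists_mem_ne (lt_of_lt_of_le (by norm_num) (hbig c' hc')) (v : V)
    exact ⟨w, Set.mem_toFinset.1 hw, hwv⟩
  · simpa [not_or] using ⟨fun h => hav (Subtype.ext h), notMem_of_mem_componentsOutside hc ha⟩
  · simpa [not_or] using ⟨fun h => hbv (Subtype.ext h), notMem_of_mem_componentsOutside hc hb⟩
  · intro h
    rw [coe_insert] at h
    exact hab (reachable_induce_supp_of_isolate_insert h ha hav hb hbv)

theorem exists_partition_of_forall_twoConnected {U : Finset V}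
    (h2 : ∀ c ∈ G.componentsOutside U, TwoConnected (G.induce c.supp)) :
    ∃ P : Fin #(G.componentsOutside U) → Finset V,
      (∀ i j, i ≠ j → Disjoint (P i) (P j)) ∧
      (Finset.univ.biUnion P = Finset.univ \ U) ∧
      (∀ i j, i ≠ j → ∀ x ∈ P i, ∀ y ∈ P j, ¬ G.Adj x y) ∧
      (∀ i, TwoConnected (G.induce ((P i : Finset V) : Set V))) := by
  set e := (G.componentsOutside U).equivFin
  have he : ∀ {i j}, (e.symm i : (G.isolate U).ConnectedComponent) = e.symm j → i = j :=
    fun h => e.symm.injective (Subtype.ext h)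
  refine ⟨fun i => (e.symm i : (G.isolate U).ConnectedComponent).supp.toFinset, ?_, ?_, ?_, ?_⟩
  · exact fun i j hij => Set.disjoint_toFinset.2
      (pairwise_disjoint_supp_connectedComponent _ fun h => hij (he h))
  · ext y
    simp only [mem_biUnion, mem_univ, true_and, Set.mem_toFinset, mem_sdiff]
    refine ⟨fun ⟨i, hi⟩ => notMem_of_mem_componentsOutside (e.symm i).2 hi, fun hy => ?_⟩
    exact ⟨e ⟨_, mem_componentsOutside.2 ⟨y, hy, rfl⟩⟩, by simp⟩
  · intro i j hij x hx y hy hxy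
    rw [Set.mem_toFinset] at hx hy
    refine hij (he ?_)
    rw [← (ConnectedComponent.mem_supp_iff _ _).1 hx,
      ← (ConnectedComponent.mem_supp_iff _ _).1 hy]
    exact ConnectedComponent.connectedComponentMk_eq_of_adj
      (isolate_adj.2 ⟨hxy, by simpa using notMem_of_mem_componentsOutside (e.symm i).2 hx,
        by simpa using notMem_of_mem_componentsOutside (e.symm j).2 hy⟩)
  · intro i
    convert h2 _ (e.symm i).2 using 2 <;> simp

end SimpleGraph

/-- Let `k ≥ 2` and let `G` be a graph with `|V(G)| ≥ k` and `δ(G) ≥ |V(G)|/k + k`. Then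
there exist an integer `s < k` and a set `U ⊆ V(G)` with `|U| ≤ s − 1` such that `G − U`
is the disjoint union of `s` vertex-disjoint 2-connected graphs. -/
theorem statement18 {V : Type*} [Fintype V] [DecidableEq V] (k : ℕ) (hk : 2 ≤ k)
    (G : SimpleGraph V) [DecidableRel G.Adj]
    (hcard : k ≤ Fintype.card V)
    (hdeg : (Fintype.card V : ℝ) / (k : ℝ) + (k : ℝ) ≤ (G.minDegree : ℝ)) :
    ∃ s : ℕ, s < k ∧ ∃ U : Finset V, U.card ≤ s - 1 ∧
      ∃ P : Fin s → Finset V,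
        (∀ i j, i ≠ j → Disjoint (P i) (P j)) ∧
        (Finset.univ.biUnion P = Finset.univ \ U) ∧
        (∀ i j, i ≠ j → ∀ x ∈ P i, ∀ y ∈ P j, ¬ G.Adj x y) ∧
        (∀ i, TwoConnected (G.induce ((P i : Finset V) : Set V))) := by
  classical
  obtain ⟨x⟩ : Nonempty V := Fintype.card_pos_iff.1 (by omega)
  have hδ : k ≤ G.minDegree := by
    have : (0 : ℝ) ≤ Fintype.card V / k := by positivity
    exact_mod_cast (show (k : ℝ) ≤ G.minDegree by linarith)
  let S := (univ : Finset (Finset V)).filter fun U => #U < k ∧ #U < #(G.componentsOutside U)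
  have hS : ∅ ∈ S := by
    simpa [S] using ⟨by omega, ⟨_, mem_componentsOutside.2 ⟨x, notMem_empty x, rfl⟩⟩⟩
  obtain ⟨U, hUS, hUmax⟩ := S.exists_max_image card ⟨∅, hS⟩
  obtain ⟨hUk, hUs⟩ := (mem_filter.1 hUS).2
  have hsk := G.card_componentsOutside_lt hdeg hUk
  by_cases h2 : ∀ c ∈ G.componentsOutside U, TwoConnected (G.induce c.supp)
  · exact ⟨_, hsk, U, by omega, G.exists_partition_of_forall_twoConnected h2⟩
  obtain ⟨c, hc, hnot⟩ := not_forall₂.1 h2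
  have hbig : ∀ c ∈ G.componentsOutside U, 3 ≤ #c.supp.toFinset := fun c hc => by
    have := minDegree_add_one_le_card_supp_add_card hc
    omega
  obtain ⟨v, hvU, hlt⟩ := exists_lt_card_componentsOutside_insert hbig hc hnot
  have := hUmax (insert v U) (by simp [S, card_insert_of_notMem hvU]; omega)
  rw [card_insert_of_notMem hvU] at this
  omega
end
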